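/- arXiv:2305.13472 — 4 statements merged into one kernel-verified Lean document; each statement's English description precedes it below -/
import Mathlib

section
/- Let 0 ≤ a < b ≤ 1, let f : ℝ → ℝ be a nonnegative integrable function with ∫_a^b f(ξ) dξ = 1, and let F(x) = ∫_a^x f(ξ) dξ. Let n ∈ ℕ, let y_1,…,y_n ∈ {0,1} be binary labels and ŷ_1,…,ŷ_n ∈ [a,b] be predictions. Define TP(ξ) = Σ_{i=1}^n y_i 𝟙_{ŷ_i > ξ}, TN(ξ) = Σ_{i=1}^n (1−y_i) 𝟙_{ŷ_i < ξ}, FP(ξ) = Σ_{i=1}^n (1−y_i) 𝟙_{ŷ_i > ξ}, FN(ξ) = Σ_{i=1}^n y_i 𝟙_{ŷ_i < ξ}. Then the expected confusion-matrix entries with respect to the threshold satisfy ∫_a^b TP(ξ) f(ξ) dξ = Σ_{i=1}^n y_i F(ŷ_i), ∫_a^b TN(ξ) f(ξ) dξ = Σ_{i=1}^n (1−y_i)(1−F(ŷ_i)), ∫_a^b FP(ξ) f(ξ) dξ = Σ_{i=1}^n (1−y_i) F(ŷ_i), and ∫_a^b FN(ξ) f(ξ) dξ = Σ_{i=1}^n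 y_i (1−F(ŷ_i)). -/
open MeasureTheory

section Aux
variable (a b : ℝ) (f : ℝ → ℝ)

lemma aux_int_lt (hf_int : IntervalIntegrable f volume a b) (c : ℝ) :
    IntervalIntegrable (fun ξ => (if ξ < c then (1:ℝ) else 0) * f ξ) volume a b := by
  have : (fun ξ => (if ξ < c then (1:ℝ) else 0) * f ξ)
      = Set.indicator (Set.Iio c) f := by
    funext ξ
    by_cases h : ξ < c <;> simp [Set.indicator, h]
  rw [this, intervalIntegrable_iff] at *
  exact hf_int.indicator measurableSet_Iio

lemma aux_int_gt (hf_int : IntervalIntegrable f volume a b) (c : ℝ) :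
    IntervalIntegrable (fun ξ => (if c < ξ then (1:ℝ) else 0) * f ξ) volume a b := by
  have : (fun ξ => (if c < ξ then (1:ℝ) else 0) * f ξ)
      = Set.indicator (Set.Ioi c) f := by
    funext ξ
    by_cases h : c < ξ <;> simp [Set.indicator, h]
  rw [this, intervalIntegrable_iff] at *
  exact hf_int.indicator measurableSet_Ioi

lemma aux_sub (hab : a ≤ b) (c d : ℝ) (hc : c ∈ Set.Icc a b) (hd : d ∈ Set.Icc a b) :
    Set.uIcc c d ⊆ Set.uIcc a b := by
  rw [Set.uIcc_of_le hab]
  exact Set.uIcc_subset_Icc hc hd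

lemma aux_val_lt (hab : a ≤ b) (hf_int : IntervalIntegrable f volume a b)
    (c : ℝ) (hc : c ∈ Set.Icc a b) :
    (∫ ξ in a..b, (if ξ < c then (1:ℝ) else 0) * f ξ) = ∫ ξ in a..c, f ξ := by
  obtain ⟨hca, hcb⟩ := hc
  have h1 : IntervalIntegrable (fun ξ => (if ξ < c then (1:ℝ) else 0) * f ξ) volume a c :=
    (aux_int_lt a b f hf_int c).mono_set
      (aux_sub a b hab a c ⟨le_refl a, hab⟩ ⟨hca, hcb⟩)
  have h2 : IntervalIntegrable (fun ξ => (if ξ < c then (1:ℝ) else 0) * f ξ) volume c b :=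
    (aux_int_lt a b f hf_int c).mono_set
      (aux_sub a b hab c b ⟨hca, hcb⟩ ⟨hab, le_refl b⟩)
  rw [← intervalIntegral.integral_add_adjacent_intervals h1 h2]
  have e2 : (∫ ξ in c..b, (if ξ < c then (1:ℝ) else 0) * f ξ) = 0 := by
    rw [intervalIntegral.integral_congr (g := fun _ => (0:ℝ))]
    · simp
    · intro ξ hξ
      rw [Set.uIcc_of_le hcb] at hξ
      have : ¬ ξ < c := not_lt.mpr hξ.1
      simp [this]
  have e1 : (∫ ξ in a..c, (if ξ < c then (1:ℝ) else 0) * f ξ) = ∫ ξ in a..c, f ξ := by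
    apply intervalIntegral.integral_congr_ae
    have hne : ∀ᵐ ξ : ℝ ∂volume, ξ ≠ c := by
      rw [MeasureTheory.ae_iff]
      simp [Real.volume_singleton]
    filter_upwards [hne] with ξ hξne hξ
    rw [Set.uIoc_of_le hca] at hξ
    have : ξ < c := lt_of_le_of_ne hξ.2 hξne
    simp [this]
  rw [e1, e2, add_zero]

lemma aux_val_gt (hab : a ≤ b) (hf_int : IntervalIntegrable f volume a b)
    (c : ℝ) (hc : c ∈ Set.Icc a b) :
    (∫ ξ in a..b, (if c < ξ then (1:ℝ) else 0) * f ξ)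
      = (∫ ξ in a..b, f ξ) - ∫ ξ in a..c, f ξ := by
  obtain ⟨hca, hcb⟩ := hc
  have h1 : IntervalIntegrable (fun ξ => (if c < ξ then (1:ℝ) else 0) * f ξ) volume a c :=
    (aux_int_gt a b f hf_int c).mono_set
      (aux_sub a b hab a c ⟨le_refl a, hab⟩ ⟨hca, hcb⟩)
  have h2 : IntervalIntegrable (fun ξ => (if c < ξ then (1:ℝ) else 0) * f ξ) volume c b :=
    (aux_int_gt a b f hf_int c).mono_set
      (aux_sub a b hab c b ⟨hca, hcb⟩ ⟨hab, le_refl b⟩)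
  rw [← intervalIntegral.integral_add_adjacent_intervals h1 h2]
  have e1 : (∫ ξ in a..c, (if c < ξ then (1:ℝ) else 0) * f ξ) = 0 := by
    rw [intervalIntegral.integral_congr (g := fun _ => (0:ℝ))]
    · simp
    · intro ξ hξ
      rw [Set.uIcc_of_le hca] at hξ
      have : ¬ c < ξ := not_lt.mpr hξ.2
      simp [this]
  have e2 : (∫ ξ in c..b, (if c < ξ then (1:ℝ) else 0) * f ξ) = ∫ ξ in c..b, f ξ := by
    apply intervalIntegral.integral_congr_ae
    filter_upwards with ξ hξ
    rw [Set.uIoc_of_le hcb] at hξ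
    simp [hξ.1]
  have e3 : (∫ ξ in c..b, f ξ) = (∫ ξ in a..b, f ξ) - ∫ ξ in a..c, f ξ := by
    have hfa : IntervalIntegrable f volume a c :=
      hf_int.mono_set (aux_sub a b hab a c ⟨le_refl a, hab⟩ ⟨hca, hcb⟩)
    have hfb : IntervalIntegrable f volume c b :=
      hf_int.mono_set (aux_sub a b hab c b ⟨hca, hcb⟩ ⟨hab, le_refl b⟩)
    rw [← intervalIntegral.integral_add_adjacent_intervals hfa hfb]
    ring
  rw [e1, e2, e3, zero_add]

end Aux

lemma aux_sum_lt (a b : ℝ) (f : ℝ → ℝ) (hab : a ≤ b)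
    (hf_int : IntervalIntegrable f volume a b) (s : Finset ℕ)
    (w c : ℕ → ℝ) (hc : ∀ i ∈ s, c i ∈ Set.Icc a b) :
    (∫ ξ in a..b, (∑ i ∈ s, w i * (if ξ < c i then (1:ℝ) else 0)) * f ξ)
      = ∑ i ∈ s, w i * ∫ ξ in a..c i, f ξ := by
  simp_rw [Finset.sum_mul, mul_assoc]
  rw [intervalIntegral.integral_finset_sum]
  · refine Finset.sum_congr rfl fun i hi => ?_
    rw [intervalIntegral.integral_const_mul, aux_val_lt a b f hab hf_int (c i) (hc i hi)]
  · intro i hi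
    exact (aux_int_lt a b f hf_int (c i)).const_mul (w i)

lemma aux_sum_gt (a b : ℝ) (f : ℝ → ℝ) (hab : a ≤ b)
    (hf_int : IntervalIntegrable f volume a b) (s : Finset ℕ)
    (w c : ℕ → ℝ) (hc : ∀ i ∈ s, c i ∈ Set.Icc a b) :
    (∫ ξ in a..b, (∑ i ∈ s, w i * (if c i < ξ then (1:ℝ) else 0)) * f ξ)
      = ∑ i ∈ s, w i * ((∫ ξ in a..b, f ξ) - ∫ ξ in a..c i, f ξ) := by
  simp_rw [Finset.sum_mul, mul_assoc]
  rw [intervalIntegral.integral_finset_sum]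
  · refine Finset.sum_congr rfl fun i hi => ?_
    rw [intervalIntegral.integral_const_mul, aux_val_gt a b f hab hf_int (c i) (hc i hi)]
  · intro i hi
    exact (aux_int_gt a b f hf_int (c i)).const_mul (w i)

/-- Expected confusion-matrix entries with respect to a random threshold. -/
theorem stmt3 (a b : ℝ) (ha : 0 ≤ a) (hab : a < b) (hb : b ≤ 1)
    (f : ℝ → ℝ) (hf_nonneg : ∀ x, 0 ≤ f x)
    (hf_int : IntervalIntegrable f volume a b)
    (hf_one : (∫ ξ in a..b, f ξ) = 1)
    (F : ℝ → ℝ) (hF : ∀ x, F x = ∫ ξ in a..x, f ξ)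
    (n : ℕ) (y : ℕ → ℝ) (hy : ∀ i ∈ Finset.Icc 1 n, y i = 0 ∨ y i = 1)
    (yh : ℕ → ℝ) (hyh : ∀ i ∈ Finset.Icc 1 n, yh i ∈ Set.Icc a b) :
    -- expected true positives
    ((∫ ξ in a..b,
        (∑ i ∈ Finset.Icc 1 n, y i * (if ξ < yh i then (1 : ℝ) else 0)) * f ξ)
      = ∑ i ∈ Finset.Icc 1 n, y i * F (yh i)) ∧
    -- expected true negatives
    ((∫ ξ in a..b,
        (∑ i ∈ Finset.Icc 1 n, (1 - y i) * (if yh i < ξ then (1 : ℝ) else 0)) * f ξ)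
      = ∑ i ∈ Finset.Icc 1 n, (1 - y i) * (1 - F (yh i))) ∧
    -- expected false positives
    ((∫ ξ in a..b,
        (∑ i ∈ Finset.Icc 1 n, (1 - y i) * (if ξ < yh i then (1 : ℝ) else 0)) * f ξ)
      = ∑ i ∈ Finset.Icc 1 n, (1 - y i) * F (yh i)) ∧
    -- expected false negatives
    ((∫ ξ in a..b,
        (∑ i ∈ Finset.Icc 1 n, y i * (if yh i < ξ then (1 : ℝ) else 0)) * f ξ)
      = ∑ i ∈ Finset.Icc 1 n, y i * (1 - F (yh i))) := by
  have hab' : a ≤ b := hab.le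
  refine ⟨?_, ?_, ?_, ?_⟩
  · rw [aux_sum_lt a b f hab' hf_int _ y yh hyh]
    exact Finset.sum_congr rfl fun i hi => by rw [hF]
  · rw [aux_sum_gt a b f hab' hf_int _ (fun i => 1 - y i) yh hyh]
    exact Finset.sum_congr rfl fun i hi => by rw [hF, hf_one]
  · rw [aux_sum_lt a b f hab' hf_int _ (fun i => 1 - y i) yh hyh]
    exact Finset.sum_congr rfl fun i hi => by rw [hF]
  · rw [aux_sum_gt a b f hab' hf_int _ y yh hyh]
    exact Finset.sum_congr rfl fun i hi => by rw [hF, hf_one]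
end

section
/- Let ω₀, ω₁ > 0, let n ∈ ℕ, let y_1,…,y_n ∈ {0,1} be binary labels and ŷ_1,…,ŷ_n ∈ (0,1) be predictions. With the weight function w_CE(y, ŷ) = −ω₀(1−y)·log(1−ŷ)/ŷ − ω₁ y·log(ŷ)/(1−ŷ) and the threshold uniformly distributed on [0,1], the sum of the expected weighted false positives and expected weighted false negatives equals the weighted cross entropy loss: Σ_{i=1}^n ∫_0^1 w_CE(y_i, ŷ_i) [ (1−y_i) 𝟙_{ŷ_i > ξ} + y_i 𝟙_{ŷ_i < ξ} ] dξ = −Σ_{i=1}^n [ ω₀ (1−y_i) log(1−ŷ_i) + ω₁ y_i log(ŷ_i) ]. -/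
/-!
For a binary label only one of the two indicators survives, and integrating it over a uniform
threshold gives `ŷ` (false positive, `y = 0`) or `1 - ŷ` (false negative, `y = 1`); this is
exactly the denominator of the corresponding cross-entropy weight, which therefore cancels.
-/

open MeasureTheory Set

theorem intervalIntegral_ite_lt {u v a : ℝ} (hua : u ≤ a) (hav : a ≤ v) :
    ∫ ξ in u..v, (if ξ < a then (1 : ℝ) else 0) = a - u := by
  have hind : (fun ξ : ℝ => if ξ < a then (1 : ℝ) else 0) = (Iio a).indicator 1 := by
    ext ξ; simp [indicator_apply]
  rw [hind, intervalIntegral.integral_of_le (hua.trans hav), integral_Ioc_eq_integral_Ioo,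
    integral_indicator_one measurableSet_Iio, measureReal_restrict_apply measurableSet_Iio,
    Iio_inter_Ioo, min_eq_left hav, Real.volume_real_Ioo_of_le hua]

theorem intervalIntegral_ite_gt {u v a : ℝ} (hua : u ≤ a) (hav : a ≤ v) :
    ∫ ξ in u..v, (if a < ξ then (1 : ℝ) else 0) = v - a := by
  have hind : (fun ξ : ℝ => if a < ξ then (1 : ℝ) else 0) = (Ioi a).indicator 1 := by
    ext ξ; simp [indicator_apply]
  rw [hind, intervalIntegral.integral_of_le (hua.trans hav), integral_Ioc_eq_integral_Ioo,
    integral_indicator_one measurableSet_Ioi, measureReal_restrict_apply measurableSet_Ioi,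
    Ioi_inter_Ioo, max_eq_left hua, Real.volume_real_Ioo_of_le hav]

theorem integral_weightedCE_mul_misclassified {ω₀ ω₁ y a : ℝ} (hy : y = 0 ∨ y = 1)
    (ha : a ∈ Ioo (0 : ℝ) 1) :
    ∫ ξ in (0 : ℝ)..1,
        (-ω₀ * (1 - y) * Real.log (1 - a) / a - ω₁ * y * Real.log a / (1 - a)) *
          ((1 - y) * (if ξ < a then (1 : ℝ) else 0) + y * (if a < ξ then (1 : ℝ) else 0))
      = -(ω₀ * (1 - y) * Real.log (1 - a) + ω₁ * y * Real.log a) := by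
  obtain ⟨ha₀, ha₁⟩ := ha
  rcases hy with rfl | rfl
  · simp only [sub_zero, mul_one, zero_mul, mul_zero, zero_div, one_mul, add_zero]
    rw [intervalIntegral.integral_const_mul, intervalIntegral_ite_lt ha₀.le ha₁.le]
    field_simp
    ring
  · simp only [sub_self, mul_zero, zero_mul, zero_div, zero_sub, mul_one, one_mul, zero_add]
    rw [intervalIntegral.integral_const_mul, intervalIntegral_ite_gt ha₀.le ha₁.le]
    field_simp [sub_ne_zero.mpr ha₁.ne']

theorem stmt9_general (ω₀ ω₁ : ℝ) (n : ℕ)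
    (y : ℕ → ℝ) (hy : ∀ i ∈ Finset.Icc 1 n, y i = 0 ∨ y i = 1)
    (yh : ℕ → ℝ) (hyh : ∀ i ∈ Finset.Icc 1 n, yh i ∈ Set.Ioo (0 : ℝ) 1) :
    (∑ i ∈ Finset.Icc 1 n,
      ∫ ξ in (0 : ℝ)..1,
        (-ω₀ * (1 - y i) * Real.log (1 - yh i) / yh i
            - ω₁ * y i * Real.log (yh i) / (1 - yh i)) *
          ((1 - y i) * (if ξ < yh i then (1 : ℝ) else 0)
            + y i * (if yh i < ξ then (1 : ℝ) else 0)))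
      = -∑ i ∈ Finset.Icc 1 n,
          (ω₀ * (1 - y i) * Real.log (1 - yh i) + ω₁ * y i * Real.log (yh i)) := by
  rw [← Finset.sum_neg_distrib]
  exact Finset.sum_congr rfl fun i hi =>
    integral_weightedCE_mul_misclassified (hy i hi) (hyh i hi)

/-- The sum of the expected weighted false positives and expected weighted false
negatives for the cross-entropy weight function (uniform threshold on `[0,1]`)
equals the weighted binary cross entropy loss. -/
theorem stmt9 (ω₀ ω₁ : ℝ) (hω₀ : 0 < ω₀) (hω₁ : 0 < ω₁) (n : ℕ)
    (y : ℕ → ℝ) (hy : ∀ i ∈ Finset.Icc 1 n, y i = 0 ∨ y i = 1)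
    (yh : ℕ → ℝ) (hyh : ∀ i ∈ Finset.Icc 1 n, yh i ∈ Set.Ioo (0 : ℝ) 1) :
    (∑ i ∈ Finset.Icc 1 n,
      ∫ ξ in (0 : ℝ)..1,
        (-ω₀ * (1 - y i) * Real.log (1 - yh i) / yh i
            - ω₁ * y i * Real.log (yh i) / (1 - yh i)) *
          ((1 - y i) * (if ξ < yh i then (1 : ℝ) else 0)
            + y i * (if yh i < ξ then (1 : ℝ) else 0)))
      = -∑ i ∈ Finset.Icc 1 n,
          (ω₀ * (1 - y i) * Real.log (1 - yh i) + ω₁ * y i * Real.log (yh i)) :=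
  stmt9_general ω₀ ω₁ n y hy yh hyh
end

section
/- Let 0 ≤ a < b ≤ 1, let f : ℝ → ℝ be a nonnegative integrable function with ∫_a^b f(ξ) dξ = 1, and let F(x) = ∫_a^x f(ξ) dξ. Let T, n ∈ ℕ, let y_1,…,y_n ∈ {0,1}, and let ŷ_k ∈ [a,b] for k ∈ {1−T,…,n}. Let ω_1,…,ω_T ≥ 0. Then the expected value (over the threshold) of the value-weighted false negatives wFN(ξ) = Σ_{i=1}^n y_i ( 1 − Σ_{j=1}^T ω_j 𝟙_{ŷ_{i−j} > ξ} ) 𝟙_{ŷ_i < ξ} satisfies ∫_a^b wFN(ξ) f(ξ) dξ = Σ_{i=1}^n y_i ( 1 − F(ŷ_i) − Σ_{j=1}^T ω_j D_i(j) ), where D_i(j) = F(ŷ_{i−j}) − F(min{ŷ_i, ŷ_{i−j}}) = max{ F(ŷ_{i−j}) − F(ŷ_i), 0 }. -/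
/-!
Multiplying out, the integrand is a linear combination of `f` restricted to `(ŷ_i, ∞)` and to
`(ŷ_i, ŷ_{i-j})`. Over `[a, b]` these integrate to `F b - F ŷ_i = 1 - F ŷ_i` and to
`F ŷ_{i-j} - F (min ŷ_i ŷ_{i-j})`, and the latter is `max (F ŷ_{i-j} - F ŷ_i) 0` because `F` is
monotone on `[a, b]`.
-/

open MeasureTheory Set

theorem IntervalIntegrable.indicator {E : Type*} [NormedAddCommGroup E] {f : ℝ → E}
    {μ : Measure ℝ} {a b : ℝ} {s : Set ℝ}
    (hf : IntervalIntegrable f μ a b) (hs : MeasurableSet s) :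
    IntervalIntegrable (s.indicator f) μ a b :=
  ⟨hf.1.indicator hs, hf.2.indicator hs⟩

section IndicatorIntegrals

variable {E : Type*} [NormedAddCommGroup E] [NormedSpace ℝ E] {f : ℝ → E} {μ : Measure ℝ}
  {a b c d : ℝ}

theorem intervalIntegral_indicator_Ioi (hc : c ∈ Icc a b) :
    ∫ x in a..b, (Ioi c).indicator f x ∂μ = ∫ x in c..b, f x ∂μ := by
  rw [intervalIntegral.integral_of_le (hc.1.trans hc.2), intervalIntegral.integral_of_le hc.2,
    integral_indicator measurableSet_Ioi, Measure.restrict_restrict measurableSet_Ioi,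
    inter_comm, Ioc_inter_Ioi, max_eq_right hc.1]

theorem Ioo_eq_Ioo_min_left (c d : ℝ) : Ioo c d = Ioo (min c d) d := by
  rcases le_total c d with h | h
  · rw [min_eq_left h]
  · rw [min_eq_right h, Ioo_self, Ioo_eq_empty h.not_gt]

theorem intervalIntegral_indicator_Ioo [NullSingletonClass μ] (hc : c ∈ Icc a b) (hd : d ∈ Icc a b) :
    ∫ x in a..b, (Ioo c d).indicator f x ∂μ = ∫ x in min c d..d, f x ∂μ := by
  rw [intervalIntegral.integral_of_le (hc.1.trans hc.2),
    intervalIntegral.integral_of_le (min_le_right c d), integral_indicator measurableSet_Ioo,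
    Measure.restrict_restrict measurableSet_Ioo, Ioo_inter_Ioc_of_left_le hd.2,
    max_eq_left hc.1, Ioo_eq_Ioo_min_left, integral_Ioc_eq_integral_Ioo]

end IndicatorIntegrals

theorem one_sub_sum_mul_ite_lt_mul {ι : Type*} (s : Finset ι) (ω : ι → ℝ) (c : ℝ)
    (d : ι → ℝ) (f : ℝ → ℝ) (ξ : ℝ) :
    (1 - ∑ j ∈ s, ω j * (if ξ < d j then (1 : ℝ) else 0)) * (if c < ξ then (1 : ℝ) else 0)
        * f ξ
      = (Ioi c).indicator f ξ - ∑ j ∈ s, ω j * (Ioo c (d j)).indicator f ξ := by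
  by_cases h : c < ξ <;> simp [h, indicator_apply, sub_mul, Finset.sum_mul, ite_mul]

theorem intervalIntegral_sum_mul_sub_sum_mul {ι κ : Type*} {μ : Measure ℝ} {a b : ℝ}
    (s : Finset ι) (t : Finset κ) (u : ι → ℝ) (v : κ → ℝ) {g : ι → ℝ → ℝ}
    {h : ι → κ → ℝ → ℝ} (hg : ∀ i ∈ s, IntervalIntegrable (g i) μ a b)
    (hh : ∀ i ∈ s, ∀ j ∈ t, IntervalIntegrable (h i j) μ a b) :
    ∫ x in a..b, ∑ i ∈ s, u i * (g i x - ∑ j ∈ t, v j * h i j x) ∂μ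
      = ∑ i ∈ s, u i * ((∫ x in a..b, g i x ∂μ) - ∑ j ∈ t, v j * ∫ x in a..b, h i j x ∂μ) := by
  have hvh : ∀ i ∈ s, ∀ j ∈ t, IntervalIntegrable (fun x => v j * h i j x) μ a b :=
    fun i hi j hj => (hh i hi j hj).const_mul (v j)
  have hsum : ∀ i ∈ s, IntervalIntegrable (fun x => ∑ j ∈ t, v j * h i j x) μ a b := by
    intro i hi
    simpa only [Finset.sum_fn] using IntervalIntegrable.sum t (hvh i hi)
  rw [intervalIntegral.integral_finsetSum fun i hi => ((hg i hi).sub (hsum i hi)).const_mul _]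
  refine Finset.sum_congr rfl fun i hi => ?_
  rw [intervalIntegral.integral_const_mul, intervalIntegral.integral_sub (hg i hi) (hsum i hi),
    intervalIntegral.integral_finsetSum (hvh i hi)]
  simp only [intervalIntegral.integral_const_mul]

section Primitive

variable {f F : ℝ → ℝ} {a b c d : ℝ}

theorem sub_eq_intervalIntegral_of_mem_Icc (hF : ∀ x, F x = ∫ ξ in a..x, f ξ)
    (hf : IntervalIntegrable f volume a b) (hc : c ∈ Icc a b) (hd : d ∈ Icc a b) :
    F d - F c = ∫ ξ in c..d, f ξ := by
  have hfa : ∀ x ∈ Icc a b, IntervalIntegrable f volume a x := fun x hx =>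
    hf.mono_set (uIcc_subset_uIcc left_mem_uIcc (Icc_subset_uIcc hx))
  rw [hF, hF, intervalIntegral.integral_interval_sub_left (hfa d hd) (hfa c hc)]

theorem monotoneOn_of_intervalIntegral (hF : ∀ x, F x = ∫ ξ in a..x, f ξ)
    (hf : IntervalIntegrable f volume a b) (hf_nonneg : ∀ x, 0 ≤ f x) :
    MonotoneOn F (Icc a b) := fun c hc d hd hcd => by
  rw [← sub_nonneg, sub_eq_intervalIntegral_of_mem_Icc hF hf hc hd]
  exact intervalIntegral.integral_nonneg hcd fun x _ => hf_nonneg x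

end Primitive

theorem MonotoneOn.sub_min_eq_max {G : ℝ → ℝ} {s : Set ℝ} (hG : MonotoneOn G s) {c d : ℝ}
    (hc : c ∈ s) (hd : d ∈ s) : G d - G (min c d) = max (G d - G c) 0 := by
  rcases le_total c d with h | h
  · rw [min_eq_left h, max_eq_left (sub_nonneg.2 (hG hc hd h))]
  · rw [min_eq_right h, sub_self, max_eq_right (sub_nonpos.2 (hG hd hc h))]

theorem stmt12_general (a b : ℝ)
    (f : ℝ → ℝ) (hf_nonneg : ∀ x, 0 ≤ f x)
    (hf_int : IntervalIntegrable f volume a b)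
    (hf_one : (∫ ξ in a..b, f ξ) = 1)
    (F : ℝ → ℝ) (hF : ∀ x, F x = ∫ ξ in a..x, f ξ)
    (T n : ℕ)
    (y : ℕ → ℝ)
    (yh : ℤ → ℝ)
    (hyh : ∀ k : ℤ, 1 - (T : ℤ) ≤ k → k ≤ (n : ℤ) → yh k ∈ Set.Icc a b)
    (ω : ℕ → ℝ) :
    ((∫ ξ in a..b,
        (∑ i ∈ Finset.Icc 1 n, y i *
            ((1 - ∑ j ∈ Finset.Icc 1 T,
                ω j * (if ξ < yh ((i : ℤ) - (j : ℤ)) then (1 : ℝ) else 0)) *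
              (if yh (i : ℤ) < ξ then (1 : ℝ) else 0))) * f ξ)
      = ∑ i ∈ Finset.Icc 1 n, y i *
          (1 - F (yh (i : ℤ)) - ∑ j ∈ Finset.Icc 1 T,
            ω j * (F (yh ((i : ℤ) - (j : ℤ)))
              - F (min (yh (i : ℤ)) (yh ((i : ℤ) - (j : ℤ))))))) ∧
    ∀ i ∈ Finset.Icc 1 n, ∀ j ∈ Finset.Icc 1 T,
      F (yh ((i : ℤ) - (j : ℤ))) - F (min (yh (i : ℤ)) (yh ((i : ℤ) - (j : ℤ))))
        = max (F (yh ((i : ℤ) - (j : ℤ))) - F (yh (i : ℤ))) 0 := by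
  have hc : ∀ i ∈ Finset.Icc 1 n, yh i ∈ Icc a b := fun i hi => by
    rw [Finset.mem_Icc] at hi
    exact hyh _ (by omega) (by omega)
  have hd : ∀ i ∈ Finset.Icc 1 n, ∀ j ∈ Finset.Icc 1 T, yh (i - j) ∈ Icc a b :=
    fun i hi j hj => by
      rw [Finset.mem_Icc] at hi hj
      exact hyh _ (by omega) (by omega)
  refine ⟨?_, fun i hi j hj =>
    (monotoneOn_of_intervalIntegral hF hf_int hf_nonneg).sub_min_eq_max (hc i hi) (hd i hi j hj)⟩
  simp_rw [Finset.sum_mul, mul_assoc (y _), one_sub_sum_mul_ite_lt_mul]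
  rw [intervalIntegral_sum_mul_sub_sum_mul _ _ _ _
    (fun _ _ => hf_int.indicator measurableSet_Ioi)
    (fun _ _ _ _ => hf_int.indicator measurableSet_Ioo)]
  refine Finset.sum_congr rfl fun i hi => ?_
  have hb : b ∈ Icc a b := ⟨(hc i hi).1.trans (hc i hi).2, le_rfl⟩
  rw [intervalIntegral_indicator_Ioi (hc i hi), ← hf_one, ← hF b,
    ← sub_eq_intervalIntegral_of_mem_Icc hF hf_int (hc i hi) hb]
  congr 2
  refine Finset.sum_congr rfl fun j hj => ?_
  have hmin : min (yh i) (yh (i - j)) ∈ Icc a b :=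
    ⟨le_min (hc i hi).1 (hd i hi j hj).1, (min_le_left _ _).trans (hc i hi).2⟩
  rw [intervalIntegral_indicator_Ioo (hc i hi) (hd i hi j hj),
    sub_eq_intervalIntegral_of_mem_Icc hF hf_int hmin (hd i hi j hj)]

/-- Expected value over the threshold of the value-weighted false negatives for
`g = g_prod`, together with the identity `D_i(j) = max{F(ŷ_{i-j}) - F(ŷ_i), 0}`. -/
theorem stmt12 (a b : ℝ) (ha : 0 ≤ a) (hab : a < b) (hb : b ≤ 1)
    (f : ℝ → ℝ) (hf_nonneg : ∀ x, 0 ≤ f x)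
    (hf_int : IntervalIntegrable f volume a b)
    (hf_one : (∫ ξ in a..b, f ξ) = 1)
    (F : ℝ → ℝ) (hF : ∀ x, F x = ∫ ξ in a..x, f ξ)
    (T n : ℕ)
    (y : ℕ → ℝ) (hy : ∀ i ∈ Finset.Icc 1 n, y i = 0 ∨ y i = 1)
    (yh : ℤ → ℝ)
    (hyh : ∀ k : ℤ, 1 - (T : ℤ) ≤ k → k ≤ (n : ℤ) → yh k ∈ Set.Icc a b)
    (ω : ℕ → ℝ) (hω : ∀ j ∈ Finset.Icc 1 T, 0 ≤ ω j) :
    ((∫ ξ in a..b,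
        (∑ i ∈ Finset.Icc 1 n, y i *
            ((1 - ∑ j ∈ Finset.Icc 1 T,
                ω j * (if ξ < yh ((i : ℤ) - (j : ℤ)) then (1 : ℝ) else 0)) *
              (if yh (i : ℤ) < ξ then (1 : ℝ) else 0))) * f ξ)
      = ∑ i ∈ Finset.Icc 1 n, y i *
          (1 - F (yh (i : ℤ)) - ∑ j ∈ Finset.Icc 1 T,
            ω j * (F (yh ((i : ℤ) - (j : ℤ)))
              - F (min (yh (i : ℤ)) (yh ((i : ℤ) - (j : ℤ))))))) ∧
    ∀ i ∈ Finset.Icc 1 n, ∀ j ∈ Finset.Icc 1 T,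
      F (yh ((i : ℤ) - (j : ℤ))) - F (min (yh (i : ℤ)) (yh ((i : ℤ) - (j : ℤ))))
        = max (F (yh ((i : ℤ) - (j : ℤ))) - F (yh (i : ℤ))) 0 :=
  stmt12_general a b f hf_nonneg hf_int hf_one F hF T n y yh hyh ω
end

section
/- Let 0 ≤ a < b ≤ 1, let f : ℝ → ℝ be a nonnegative integrable function with ∫_a^b f(ξ) dξ = 1, and let F(x) = ∫_a^x f(ξ) dξ. Let T ∈ ℕ, T ≥ 1, u_1,…,u_T ∈ (a,b), v ∈ (a,b), and ω_1 ≥ … ≥ ω_T ≥ 0. Define m_1 = a and m_j = max{a, u_1,…,u_{j−1}} for j ≥ 2. Suppose 1 = t_1 < t_2 < … < t_S ≤ T are indices such that u_{t_1} < u_{t_2} < … < u_{t_S}, m_{t_j} = u_{t_{j−1}} for j = 2,…,S, and u_l ≤ m_l for every l ∈ {1,…,T} \ {t_1,…,t_S}. Then, setting ω_{t_{S+1}} = 0, ∫_a^b ( 1 − max_{j=1,…,T}( ω_j 𝟙_{u_j > ξ} ) ) ( 1 − 𝟙_{v > ξ} ) f(ξ) dξ = 1 − F(v) − Σ_{j=1}^S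 ( ω_{t_j} − ω_{t_{j+1}} ) ( F(u_{t_j}) − F(min{u_{t_j}, v}) ). -/
/-! Every prediction `u_l` is dominated by an earlier member of the hierarchy: `u_l ≤ u_{t_j}` for
some `t_j ≤ l` (induct on `l`: off the hierarchy `u_l ≤ m_l`, which is `a` or an earlier `u_i`).
As `ω` is non-increasing, `max_l ω_l 𝟙[ξ < u_l]` is therefore `ω_{t_{j₀}}` for the first hierarchy
index `j₀` with `ξ < u_{t_{j₀}}`, and `0` if there is none; since `u_{t_j}` increases in `j`, this is
the telescoping sum `∑_j (ω_{t_j} - ω_{t_{j+1}}) 𝟙[ξ < u_{t_j}]`. Multiplying by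
`(1 - 𝟙[ξ < v]) f(ξ)` and integrating term by term, using `𝟙[ξ < u] 𝟙[ξ < v] = 𝟙[ξ < min u v]`
and `∫_a^b 𝟙[ξ < c] f = F(c)`, gives the formula. -/

open MeasureTheory Finset

lemma monotoneOn_Icc_of_le_add_one {α : Type*} [Preorder α] {f : ℕ → α} {a b : ℕ}
    (h : ∀ n, a ≤ n → n + 1 ≤ b → f n ≤ f (n + 1)) : MonotoneOn f (Set.Icc a b) := by
  intro x hx y hy hxy
  induction y, hxy using Nat.le_induction with
  | base => rfl
  | succ n hxn ih =>
    exact (ih ⟨hx.1.trans hxn, Nat.le_of_succ_le hy.2⟩).trans (h n (hx.1.trans hxn) hy.2)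

lemma antitoneOn_Icc_of_add_one_le {α : Type*} [Preorder α] {f : ℕ → α} {a b : ℕ}
    (h : ∀ n, a ≤ n → n + 1 ≤ b → f (n + 1) ≤ f n) : AntitoneOn f (Set.Icc a b) :=
  monotoneOn_Icc_of_le_add_one (α := αᵒᵈ) h

lemma exists_mem_le_and_le_of_le_fold_max {α : Type*} [LinearOrder α] {a : α} {u : ℕ → α}
    {t : ℕ → ℕ} {S T : ℕ} (hS : 1 ≤ S) (ht1 : t 1 = 1) (ha : a ≤ u 1)
    (hempty : ∀ l ∈ Icc 1 T, (∀ j ∈ Icc 1 S, t j ≠ l) → u l ≤ (Icc 1 (l - 1)).fold max a u) :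
    ∀ l ∈ Icc 1 T, ∃ j ∈ Icc 1 S, t j ≤ l ∧ u l ≤ u (t j) := by
  intro l
  induction l using Nat.strong_induction_on with
  | _ l ih =>
  intro hl
  by_cases hl_t : ∃ j ∈ Icc 1 S, t j = l
  · obtain ⟨j, hj, rfl⟩ := hl_t
    exact ⟨j, hj, le_rfl, le_rfl⟩
  push Not at hl_t
  have hl' := mem_Icc.mp hl
  rcases (le_fold_max (u l)).mp (hempty l hl hl_t) with hla | ⟨i, hi, hli⟩
  · exact ⟨1, mem_Icc.mpr ⟨le_rfl, hS⟩, by rw [ht1]; exact hl'.1, by rw [ht1]; exact hla.trans ha⟩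
  · have hi' := mem_Icc.mp hi
    obtain ⟨j, hj, htj, hij⟩ := ih i (by omega) (mem_Icc.mpr ⟨hi'.1, by omega⟩)
    exact ⟨j, hj, by omega, hli.trans hij⟩

lemma sum_sub_mul_ite_of_iff {R : Type*} [Ring R] (g : ℕ → R) (P : ℕ → Prop) [DecidablePred P]
    {j₀ S : ℕ} (h₁ : 1 ≤ j₀) (hS : j₀ ≤ S + 1) (hP : ∀ j ∈ Icc 1 S, P j ↔ j₀ ≤ j) :
    ∑ j ∈ Icc 1 S, (g j - g (j + 1)) * (if P j then 1 else 0) = g j₀ - g (S + 1) := by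
  have hfilter : (Icc 1 S).filter P = Ico j₀ (S + 1) := by
    ext j
    simp only [mem_filter, mem_Ico]
    constructor
    · rintro ⟨hj, hPj⟩
      exact ⟨(hP j hj).1 hPj, Nat.lt_succ_of_le (mem_Icc.mp hj).2⟩
    · rintro ⟨hj₀j, hjS⟩
      have hj : j ∈ Icc 1 S := mem_Icc.mpr ⟨by omega, by omega⟩
      exact ⟨hj, (hP j hj).2 hj₀j⟩
  simp only [mul_ite, mul_one, mul_zero]
  rw [← sum_filter, hfilter, ← neg_sub, ← sum_Ico_sub (f := g) hS, ← sum_neg_distrib]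
  simp only [neg_sub]

theorem sup'_mul_ite_lt_eq_sum {α R : Type*} [LinearOrder α] [Ring R] [LinearOrder R]
    [IsOrderedRing R] {T S : ℕ} (hT : (Icc 1 T).Nonempty) {u : ℕ → α} {ω : ℕ → R}
    {t : ℕ → ℕ} (hω₀ : ∀ j ∈ Icc 1 T, 0 ≤ ω j) (hω : AntitoneOn ω (Set.Icc 1 T))
    (ht : MonotoneOn t (Set.Icc 1 S)) (hut : MonotoneOn (u ∘ t) (Set.Icc 1 S))
    (htT : ∀ j ∈ Icc 1 S, t j ∈ Icc 1 T)
    (hdom : ∀ l ∈ Icc 1 T, ∃ j ∈ Icc 1 S, t j ≤ l ∧ u l ≤ u (t j)) (ξ : α) :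
    (Icc 1 T).sup' hT (fun l => ω l * if ξ < u l then 1 else 0) =
      ∑ j ∈ Icc 1 S, (ω (t j) - if j + 1 ≤ S then ω (t (j + 1)) else 0) *
        if ξ < u (t j) then 1 else 0 := by
  classical
  -- `j₀ = S + 1` when no hierarchy value exceeds `ξ`;
  -- `g (S + 1) = 0` is the convention `ω_{t_{S+1}} = 0`.
  have hex : ∃ j, 1 ≤ j ∧ (j ≤ S → ξ < u (t j)) := ⟨S + 1, by omega, by omega⟩
  obtain ⟨hj₀₁, hj₀⟩ := Nat.find_spec hex
  set j₀ := Nat.find hex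
  have hj₀S : j₀ ≤ S + 1 := Nat.find_min' hex ⟨by omega, by omega⟩
  have hlt_iff : ∀ j ∈ Icc 1 S, ξ < u (t j) ↔ j₀ ≤ j := fun j hj => by
    rw [mem_Icc] at hj
    exact ⟨fun h => Nat.find_min' hex ⟨hj.1, fun _ => h⟩,
      fun h => (hj₀ (h.trans hj.2)).trans_le (hut ⟨hj₀₁, by omega⟩ ⟨hj.1, hj.2⟩ h)⟩
  set g : ℕ → R := fun j => if j ≤ S then ω (t j) else 0
  have hsum : ∑ j ∈ Icc 1 S, (ω (t j) - if j + 1 ≤ S then ω (t (j + 1)) else 0) *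
      (if ξ < u (t j) then 1 else 0) = g j₀ := by
    rw [← sub_zero (g j₀), show (0 : R) = g (S + 1) by simp [g],
      ← sum_sub_mul_ite_of_iff g _ hj₀₁ hj₀S hlt_iff]
    refine sum_congr rfl fun j hj => ?_
    simp [g, (mem_Icc.mp hj).2]
  rw [hsum]
  have hg₀ : 0 ≤ g j₀ := by
    simp only [g]
    split_ifs with h
    · exact hω₀ _ (htT j₀ (mem_Icc.mpr ⟨hj₀₁, h⟩))
    · exact le_rfl
  apply le_antisymm
  · refine sup'_le _ _ fun l hl => ?_
    split_ifs with hξ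
    · obtain ⟨j, hj, htj, hle⟩ := hdom l hl
      have hj₀j : j₀ ≤ j := (hlt_iff j hj).1 (hξ.trans_le hle)
      have hj := mem_Icc.mp hj
      have hj₀mem : j₀ ∈ Icc 1 S := mem_Icc.mpr ⟨hj₀₁, hj₀j.trans hj.2⟩
      simp only [g, if_pos (mem_Icc.mp hj₀mem).2, mul_one]
      exact hω (mem_Icc.mp (htT j₀ hj₀mem)) (mem_Icc.mp hl)
        ((ht (mem_Icc.mp hj₀mem) hj hj₀j).trans htj)
    · simpa using hg₀
  · by_cases hj₀S' : j₀ ≤ S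
    · have hj₀mem : j₀ ∈ Icc 1 S := mem_Icc.mpr ⟨hj₀₁, hj₀S'⟩
      exact le_sup'_of_le _ (htT j₀ hj₀mem) (by simp [g, hj₀S', hj₀ hj₀S'])
    · have h₁ : 1 ∈ Icc 1 T := mem_Icc.mpr ⟨le_rfl, (nonempty_Icc.mp hT)⟩
      refine le_sup'_of_le _ h₁ ?_
      simp only [g, if_neg hj₀S']
      exact mul_nonneg (hω₀ 1 h₁) (by split_ifs <;> simp)

lemma ite_lt_mul_eq_indicator {α R : Type*} [LinearOrder α] [MulZeroOneClass R] (c x : α)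
    (f : α → R) : (if x < c then 1 else 0) * f x = (Set.Iio c).indicator f x := by
  simp [Set.indicator_apply, ite_mul]

lemma ite_lt_min_eq_mul {α R : Type*} [LinearOrder α] [MulZeroOneClass R] (x c d : α) :
    (if x < min c d then (1 : R) else 0) = (if x < c then 1 else 0) * (if x < d then 1 else 0) := by
  by_cases hc : x < c <;> by_cases hd : x < d <;> simp [hc, hd]

section Integral

variable {μ : Measure ℝ} {f : ℝ → ℝ} {a b : ℝ}

lemma intervalIntegral_ite_lt_mul [NullSingletonClass μ] {c : ℝ} (hc : c ∈ Set.Icc a b) :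
    ∫ x in a..b, (if x < c then 1 else 0) * f x ∂μ = ∫ x in a..c, f x ∂μ := by
  have hinter : Set.Iio c ∩ Set.Ioc a b = Set.Ioo a c := by
    ext x
    simp only [Set.mem_inter_iff, Set.mem_Iio, Set.mem_Ioc, Set.mem_Ioo]
    exact ⟨fun ⟨h₁, h₂, _⟩ => ⟨h₂, h₁⟩, fun ⟨h₁, h₂⟩ => ⟨h₂, h₁, h₂.le.trans hc.2⟩⟩
  simp only [ite_lt_mul_eq_indicator]
  rw [intervalIntegral.integral_of_le (hc.1.trans hc.2), intervalIntegral.integral_of_le hc.1,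
    integral_indicator measurableSet_Iio, Measure.restrict_restrict measurableSet_Iio, hinter,
    integral_Ioc_eq_integral_Ioo]

lemma IntervalIntegrable.ite_lt_mul (hf : IntervalIntegrable f μ a b) (c : ℝ) :
    IntervalIntegrable (fun x => (if x < c then 1 else 0) * f x) μ a b := by
  simp only [ite_lt_mul_eq_indicator]
  rw [intervalIntegrable_iff] at hf ⊢
  exact hf.indicator measurableSet_Iio

theorem integral_one_sub_sum_mul_ite_lt {ι : Type*} (s : Finset ι) (c w : ι → ℝ) {v : ℝ}
    [NullSingletonClass μ] (hf : IntervalIntegrable f μ a b) (hw : ∀ i ∈ s, w i ∈ Set.Icc a b)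
    (hv : v ∈ Set.Icc a b) :
    ∫ x in a..b, (1 - ∑ i ∈ s, c i * (if x < w i then 1 else 0)) *
        (1 - if x < v then 1 else 0) * f x ∂μ =
      (∫ x in a..b, f x ∂μ) - (∫ x in a..v, f x ∂μ) -
        ∑ i ∈ s, c i * ((∫ x in a..w i, f x ∂μ) - ∫ x in a..min (w i) v, f x ∂μ) := by
  have hpt : ∀ x, (1 - ∑ i ∈ s, c i * (if x < w i then 1 else 0)) *
        (1 - if x < v then 1 else 0) * f x =
      f x - (if x < v then 1 else 0) * f x - ∑ i ∈ s, c i *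
        ((if x < w i then 1 else 0) * f x - (if x < min (w i) v then 1 else 0) * f x) := by
    intro x
    have hsum : ∑ i ∈ s, c i *
        ((if x < w i then 1 else 0) * f x - (if x < min (w i) v then 1 else 0) * f x) =
        (∑ i ∈ s, c i * (if x < w i then 1 else 0)) * ((1 - if x < v then 1 else 0) * f x) := by
      rw [sum_mul]
      exact sum_congr rfl fun i _ => by rw [ite_lt_min_eq_mul]; ring
    rw [hsum]
    ring
  have hmin : ∀ i ∈ s, min (w i) v ∈ Set.Icc a b := fun i hi =>
    ⟨le_min (hw i hi).1 hv.1, (min_le_left _ _).trans (hw i hi).2⟩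
  have hterm : ∀ i ∈ s, IntervalIntegrable (fun x => c i *
      ((if x < w i then 1 else 0) * f x - (if x < min (w i) v then 1 else 0) * f x)) μ a b :=
    fun i _ => ((hf.ite_lt_mul _).sub (hf.ite_lt_mul _)).const_mul _
  have hsum := IntervalIntegrable.sum s hterm
  rw [sum_fn] at hsum
  simp only [hpt]
  rw [intervalIntegral.integral_sub (hf.sub (hf.ite_lt_mul v)) hsum,
    intervalIntegral.integral_sub hf (hf.ite_lt_mul v), intervalIntegral.integral_finsetSum hterm,
    intervalIntegral_ite_lt_mul hv]
  refine congrArg _ (sum_congr rfl fun i hi => ?_)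
  rw [intervalIntegral.integral_const_mul, intervalIntegral.integral_sub (hf.ite_lt_mul _)
    (hf.ite_lt_mul _), intervalIntegral_ite_lt_mul (hw i hi),
    intervalIntegral_ite_lt_mul (hmin i hi)]

end Integral

theorem stmt18_general (a b : ℝ)
    (f : ℝ → ℝ)
    (hf_int : IntervalIntegrable f volume a b)
    (hf_one : (∫ ξ in a..b, f ξ) = 1)
    (F : ℝ → ℝ) (hF : ∀ x, F x = ∫ ξ in a..x, f ξ)
    (T : ℕ) (hT : 1 ≤ T)
    (u : ℕ → ℝ) (hu : ∀ j ∈ Finset.Icc 1 T, u j ∈ Set.Ioo a b)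
    (v : ℝ) (hv : v ∈ Set.Ioo a b)
    (ω : ℕ → ℝ) (hω_nonneg : ∀ j ∈ Finset.Icc 1 T, 0 ≤ ω j)
    (hω_mono : ∀ j, 1 ≤ j → j + 1 ≤ T → ω (j + 1) ≤ ω j)
    (m : ℕ → ℝ) (hm : ∀ j, m j = (Finset.Icc 1 (j - 1)).fold max a u)
    (S : ℕ) (hS : 1 ≤ S) (t : ℕ → ℕ)
    (ht1 : t 1 = 1)
    (ht_mono : ∀ j, 1 ≤ j → j + 1 ≤ S → t j < t (j + 1))
    (htS : t S ≤ T)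
    (hu_mono : ∀ j, 1 ≤ j → j + 1 ≤ S → u (t j) < u (t (j + 1)))
    (hempty : ∀ l ∈ Finset.Icc 1 T, (∀ j ∈ Finset.Icc 1 S, t j ≠ l) → u l ≤ m l) :
    (∫ ξ in a..b,
        (1 - (Finset.Icc 1 T).sup' (Finset.nonempty_Icc.mpr hT)
            (fun j => ω j * (if ξ < u j then (1 : ℝ) else 0))) *
          (1 - (if ξ < v then (1 : ℝ) else 0)) * f ξ)
      = 1 - F v - ∑ j ∈ Finset.Icc 1 S,
          (ω (t j) - if j + 1 ≤ S then ω (t (j + 1)) else 0) *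
            (F (u (t j)) - F (min (u (t j)) v)) := by
  have ht : MonotoneOn t (Set.Icc 1 S) :=
    monotoneOn_Icc_of_le_add_one fun j h₁ h₂ => (ht_mono j h₁ h₂).le
  have hut : MonotoneOn (u ∘ t) (Set.Icc 1 S) :=
    monotoneOn_Icc_of_le_add_one fun j h₁ h₂ => (hu_mono j h₁ h₂).le
  have htT : ∀ j ∈ Finset.Icc 1 S, t j ∈ Finset.Icc 1 T := fun j hj => by
    have hj := Finset.mem_Icc.mp hj
    have h₁ : t 1 ≤ t j := ht ⟨le_rfl, hS⟩ hj hj.1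
    have h₂ : t j ≤ t S := ht hj ⟨hS, le_rfl⟩ hj.2
    exact Finset.mem_Icc.mpr ⟨ht1 ▸ h₁, h₂.trans htS⟩
  have hdom := exists_mem_le_and_le_of_le_fold_max hS ht1
    (hu 1 (Finset.mem_Icc.mpr ⟨le_rfl, hT⟩)).1.le fun l hl h => hm l ▸ hempty l hl h
  have hIcc : ∀ x ∈ Set.Ioo a b, x ∈ Set.Icc a b := fun x hx => Set.Ioo_subset_Icc_self hx
  simp_rw [sup'_mul_ite_lt_eq_sum _ hω_nonneg (antitoneOn_Icc_of_add_one_le hω_mono) ht hut htT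
    hdom]
  rw [integral_one_sub_sum_mul_ite_lt _ _ (fun j => u (t j)) hf_int
    (fun j hj => hIcc _ (hu _ (htT j hj))) (hIcc v hv)]
  simp only [hF, hf_one]

/-- Telescoped form of the `g = g_max` value-weighted theorem: with the hierarchy
`1 = t_1 < t_2 < … < t_S ≤ T` of indices with nonempty power intervals (each being
the actual precursor of the next, all other indices having empty power interval),
and the convention `ω_{t_{S+1}} = 0`,
`∫_a^b (1 - max_j ω_j 𝟙_{u_j > ξ})(1 - 𝟙_{v > ξ}) f(ξ) dξ
= 1 - F(v) - ∑_{j=1}^S (ω_{t_j} - ω_{t_{j+1}})(F(u_{t_j}) - F(min{u_{t_j}, v}))`. -/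
theorem stmt18 (a b : ℝ) (ha : 0 ≤ a) (hab : a < b) (hb : b ≤ 1)
    (f : ℝ → ℝ) (hf_nonneg : ∀ x, 0 ≤ f x)
    (hf_int : IntervalIntegrable f volume a b)
    (hf_one : (∫ ξ in a..b, f ξ) = 1)
    (F : ℝ → ℝ) (hF : ∀ x, F x = ∫ ξ in a..x, f ξ)
    (T : ℕ) (hT : 1 ≤ T)
    (u : ℕ → ℝ) (hu : ∀ j ∈ Finset.Icc 1 T, u j ∈ Set.Ioo a b)
    (v : ℝ) (hv : v ∈ Set.Ioo a b)
    (ω : ℕ → ℝ) (hω_nonneg : ∀ j ∈ Finset.Icc 1 T, 0 ≤ ω j)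
    (hω_mono : ∀ j, 1 ≤ j → j + 1 ≤ T → ω (j + 1) ≤ ω j)
    (m : ℕ → ℝ) (hm : ∀ j, m j = (Finset.Icc 1 (j - 1)).fold max a u)
    (S : ℕ) (hS : 1 ≤ S) (t : ℕ → ℕ)
    (ht1 : t 1 = 1)
    (ht_mono : ∀ j, 1 ≤ j → j + 1 ≤ S → t j < t (j + 1))
    (htS : t S ≤ T)
    (hu_mono : ∀ j, 1 ≤ j → j + 1 ≤ S → u (t j) < u (t (j + 1)))
    (hprec : ∀ j, 1 ≤ j → j + 1 ≤ S → m (t (j + 1)) = u (t j))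
    (hempty : ∀ l ∈ Finset.Icc 1 T, (∀ j ∈ Finset.Icc 1 S, t j ≠ l) → u l ≤ m l) :
    (∫ ξ in a..b,
        (1 - (Finset.Icc 1 T).sup' (Finset.nonempty_Icc.mpr hT)
            (fun j => ω j * (if ξ < u j then (1 : ℝ) else 0))) *
          (1 - (if ξ < v then (1 : ℝ) else 0)) * f ξ)
      = 1 - F v - ∑ j ∈ Finset.Icc 1 S,
          (ω (t j) - if j + 1 ≤ S then ω (t (j + 1)) else 0) *
            (F (u (t j)) - F (min (u (t j)) v)) :=
  stmt18_general a b f hf_int hf_one F hF T hT u hu v hv ω hω_nonneg hω_mono m hm S hS t ht1 ht_mono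
    htS hu_mono hempty
end
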